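/- In the setting of the previous statement (finite irreducible generator A with invariant μ of full support, constants κ, λ, γ > 0, speed function v : S → ℝ, free energy functions F^A and F^{sym} defined via the Donsker–Varadhan rate functions I_e^A and I_e^{sym}), define the rate functions I^A(x) = sup_{α∈ℝ}(αx − F^A(α)) and I^{sym}(x) = sup_{α∈ℝ}(αx − F^{sym}(α)). Then I^{sym}(x) ≤ I^A(x) for every x ∈ ℝ: the large deviation rate function of the active particle is minimized by the reversible state process. -/

import Mathlib

/-!
Evaluating the variational formula for `I_e^A(ξ)` at `u = √(ξ/μ) + ε` (adding a constant does
not change `Au`, since `A 𝟙 = 0`) and letting `ε ↓ 0` gives `I_e^sym(ξ) = ⟨u, -Au⟩_μ ≤ I_e^A(ξ)`.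
Hence `F^A ≤ F^sym` pointwise, and the Legendre transform reverses this inequality.
All suprema involved are genuine: the inner ones because `I_e^sym` is a nonnegative Dirichlet
form and the simplex is compact, the outer one because `F^A` grows like `2κ cosh α`.
-/

open Matrix Finset Filter Topology Set

theorem sq_div_four_le_cosh_sub_one (α : ℝ) : α ^ 2 / 4 ≤ Real.cosh α - 1 := by
  rw [← Real.cosh_abs, Real.cosh_eq]
  nlinarith [Real.quadratic_le_exp_of_nonneg (abs_nonneg α), Real.add_one_le_exp (-|α|), sq_abs α]

theorem mul_sub_two_mul_cosh_sub_one_le {κ : ℝ} (hκ : 0 < κ) (α x : ℝ) :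
    α * x - 2 * κ * (Real.cosh α - 1) ≤ x ^ 2 / (2 * κ) := by
  have hcosh := mul_le_mul_of_nonneg_left (sq_div_four_le_cosh_sub_one α) hκ.le
  have hsq : 0 ≤ (κ * α - x) ^ 2 / (2 * κ) := by positivity
  have : (κ * α - x) ^ 2 / (2 * κ) = κ * α ^ 2 / 2 - α * x + x ^ 2 / (2 * κ) := by
    field_simp; ring
  linarith

theorem sSup_setOf_exists_eq {α : Type*} (f : α → ℝ) :
    sSup {y | ∃ a, y = f a} = ⨆ a, f a := by
  congr 1
  ext
  simp [eq_comm]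

theorem sSup_setOf_stdSimplex {ι : Type*} [Fintype ι] (f : (ι → ℝ) → ℝ) :
    sSup {y | ∃ ξ : ι → ℝ, (∀ i, 0 ≤ ξ i) ∧ (∑ i, ξ i = 1) ∧ y = f ξ} =
      ⨆ ξ : stdSimplex ℝ ι, f ξ.1 := by
  congr 1
  ext y
  constructor
  · rintro ⟨ξ, hξ0, hξ1, rfl⟩
    exact ⟨⟨ξ, hξ0, hξ1⟩, rfl⟩
  · rintro ⟨⟨ξ, hξ0, hξ1⟩, rfl⟩
    exact ⟨ξ, hξ0, hξ1, rfl⟩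

theorem bddAbove_range_sub_mul {K : Type*} [TopologicalSpace K] [CompactSpace K]
    {g I : K → ℝ} {γ : ℝ} (hg : Continuous g) (hI : ∀ k, 0 ≤ I k) (hγ : 0 ≤ γ) :
    BddAbove (range fun k => g k - γ * I k) := by
  obtain ⟨B, hB⟩ := (isCompact_range hg).bddAbove
  refine ⟨B, ?_⟩
  rintro _ ⟨k, rfl⟩
  have := hB ⟨k, rfl⟩
  nlinarith [mul_nonneg hγ (hI k)]

theorem ciSup_sub_mul_le_ciSup_sub_mul {K : Type*} [TopologicalSpace K] [CompactSpace K]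
    {g I I' : K → ℝ} {γ : ℝ} (hg : Continuous g) (hI' : ∀ k, 0 ≤ I' k)
    (hle : ∀ k, I' k ≤ I k) (hγ : 0 ≤ γ) :
    ⨆ k, (g k - γ * I k) ≤ ⨆ k, (g k - γ * I' k) :=
  ciSup_mono (bddAbove_range_sub_mul hg hI' hγ) fun k =>
    sub_le_sub_left (mul_le_mul_of_nonneg_left (hle k) hγ) _

theorem ciSup_mul_sub_le_ciSup_mul_sub {F G : ℝ → ℝ} {κ c : ℝ} (hκ : 0 < κ)
    (hF : ∀ α, 2 * κ * (Real.cosh α - 1) - c ≤ F α) (hFG : ∀ α, F α ≤ G α) (x : ℝ) :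
    ⨆ α, (α * x - G α) ≤ ⨆ α, (α * x - F α) := by
  refine ciSup_mono ⟨x ^ 2 / (2 * κ) + c, ?_⟩ fun α => by linarith [hFG α]
  rintro _ ⟨α, rfl⟩
  linarith [hF α, mul_sub_two_mul_cosh_sub_one_le hκ α x]

section Generator

variable {ι : Type*} [Fintype ι] {A : Matrix ι ι ℝ}

theorem diag_mul_le_mulVec (hA_off : ∀ i j, i ≠ j → 0 ≤ A i j) {u : ι → ℝ}
    (hu : ∀ i, 0 ≤ u i) (i : ι) : A i i * u i ≤ (A *ᵥ u) i := by
  classical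
  rw [mulVec, dotProduct, ← add_sum_erase _ _ (mem_univ i)]
  exact le_add_of_nonneg_right
    (sum_nonneg fun j hj => mul_nonneg (hA_off i j (ne_of_mem_erase hj).symm) (hu j))

theorem mulVec_add_const (hA_row : ∀ i, ∑ j, A i j = 0) (u : ι → ℝ) (c : ℝ) :
    A *ᵥ (fun j => u j + c) = A *ᵥ u := by
  ext i
  simp [mulVec, dotProduct, mul_add, sum_add_distrib, ← sum_mul, hA_row]

def dirichletForm (A : Matrix ι ι ℝ) (μ u : ι → ℝ) : ℝ :=
  ∑ i, μ i * u i * (-(A *ᵥ u) i)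

theorem two_mul_dirichletForm (hA_row : ∀ i, ∑ j, A i j = 0) {μ : ι → ℝ}
    (hμ_inv : ∀ j, ∑ i, μ i * A i j = 0) (u : ι → ℝ) :
    2 * dirichletForm A μ u = ∑ i, ∑ j, μ i * A i j * (u i - u j) ^ 2 := by
  have hrow : ∑ i, ∑ j, μ i * A i j * u i ^ 2 = 0 := by
    simp [← sum_mul, ← mul_sum, hA_row]
  have hcol : ∑ i, ∑ j, μ i * A i j * u j ^ 2 = 0 := by
    rw [sum_comm]
    simp [← sum_mul, hμ_inv]
  have hcross : dirichletForm A μ u = -∑ i, ∑ j, μ i * A i j * (u i * u j) := by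
    simp only [dirichletForm, mulVec, dotProduct, mul_sum, ← sum_neg_distrib, mul_neg]
    exact sum_congr rfl fun i _ => sum_congr rfl fun j _ => by ring
  have hexpand : ∑ i, ∑ j, μ i * A i j * (u i - u j) ^ 2 = ∑ i, ∑ j, μ i * A i j * u i ^ 2
      + ∑ i, ∑ j, μ i * A i j * u j ^ 2 - 2 * ∑ i, ∑ j, μ i * A i j * (u i * u j) := by
    simp only [mul_sum, ← sum_add_distrib, ← sum_sub_distrib]
    exact sum_congr rfl fun i _ => sum_congr rfl fun j _ => by ring
  rw [hexpand, hrow, hcol, hcross]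
  ring

theorem dirichletForm_nonneg (hA_off : ∀ i j, i ≠ j → 0 ≤ A i j)
    (hA_row : ∀ i, ∑ j, A i j = 0) {μ : ι → ℝ} (hμ : ∀ i, 0 ≤ μ i)
    (hμ_inv : ∀ j, ∑ i, μ i * A i j = 0) (u : ι → ℝ) : 0 ≤ dirichletForm A μ u := by
  have h : 0 ≤ ∑ i, ∑ j, μ i * A i j * (u i - u j) ^ 2 := by
    refine sum_nonneg fun i _ => sum_nonneg fun j _ => ?_
    rcases eq_or_ne i j with rfl | hij
    · simp
    · exact mul_nonneg (mul_nonneg (hμ i) (hA_off i j hij)) (sq_nonneg _)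
  linarith [two_mul_dirichletForm hA_row hμ_inv u]

def donskerVaradhanSet (A : Matrix ι ι ℝ) (ξ : ι → ℝ) : Set ℝ :=
  {x | ∃ u : ι → ℝ, (∀ i, 0 < u i) ∧ x = -∑ i, ξ i * (A *ᵥ u) i / u i}

theorem bddAbove_donskerVaradhanSet (hA_off : ∀ i j, i ≠ j → 0 ≤ A i j) {ξ : ι → ℝ}
    (hξ : ∀ i, 0 ≤ ξ i) : BddAbove (donskerVaradhanSet A ξ) := by
  refine ⟨∑ i, ξ i * -A i i, ?_⟩
  rintro _ ⟨u, hu, rfl⟩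
  rw [← sum_neg_distrib]
  refine sum_le_sum fun i _ => ?_
  have hdiag := (le_div_iff₀ (hu i)).2 (diag_mul_le_mulVec hA_off (fun j => (hu j).le) i)
  rw [mul_div_assoc]
  linarith [mul_le_mul_of_nonneg_left hdiag (hξ i)]

theorem mul_sqrt_div_eq_div_sqrt_div {m x : ℝ} (hm : 0 < m) :
    m * √(x / m) = x / √(x / m) := by
  nth_rw 1 [← Real.div_sqrt]
  rw [← mul_div_assoc, mul_div_cancel₀ _ hm.ne']

theorem dirichletForm_sqrt_le_sSup_donskerVaradhanSet (hA_off : ∀ i j, i ≠ j → 0 ≤ A i j)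
    (hA_row : ∀ i, ∑ j, A i j = 0) {μ ξ : ι → ℝ} (hμ : ∀ i, 0 < μ i) (hξ : ∀ i, 0 ≤ ξ i) :
    dirichletForm A μ (fun i => √(ξ i / μ i)) ≤ sSup (donskerVaradhanSet A ξ) := by
  set u : ι → ℝ := fun i => √(ξ i / μ i)
  have hform : dirichletForm A μ u = -∑ i, ξ i * (A *ᵥ u) i / u i := by
    simp only [dirichletForm, ← sum_neg_distrib, u, mul_sqrt_div_eq_div_sqrt_div (hμ _)]
    exact sum_congr rfl fun i _ => by ring
  have hmem : ∀ ε > 0, -∑ i, ξ i * (A *ᵥ u) i / (u i + ε) ∈ donskerVaradhanSet A ξ :=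
    fun ε hε => ⟨fun i => u i + ε, fun i => by positivity, by rw [mulVec_add_const hA_row]⟩
  have hlim : Tendsto (fun ε => -∑ i, ξ i * (A *ᵥ u) i / (u i + ε)) (𝓝[>] 0)
      (𝓝 (-∑ i, ξ i * (A *ᵥ u) i / u i)) := by
    refine (tendsto_finsetSum _ fun i _ => ?_).neg
    rcases (hξ i).eq_or_lt with hξi | hξi
    · simp [← hξi]
    have hui : u i ≠ 0 := (Real.sqrt_pos.2 (div_pos hξi (hμ i))).ne'
    have : ContinuousAt (fun ε => ξ i * (A *ᵥ u) i / (u i + ε)) 0 := by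
      fun_prop (disch := simpa using hui)
    simpa using this.tendsto.mono_left nhdsWithin_le_nhds
  rw [hform]
  exact le_of_tendsto hlim (eventually_nhdsWithin_of_forall fun ε hε =>
    le_csSup (bddAbove_donskerVaradhanSet hA_off hξ) (hmem ε hε))

end Generator

theorem rate_function_reversible_min_general
    {n : ℕ}
    (A : Matrix (Fin n) (Fin n) ℝ) (μ : Fin n → ℝ)
    (κ lam γ : ℝ) (hκ : 0 < κ) (hlam : 0 < lam) (hγ : 0 < γ)
    (v : Fin n → ℝ)
    -- A is a Markov generator
    (hA_off : ∀ i j, i ≠ j → 0 ≤ A i j)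
    (hA_row : ∀ i, ∑ j, A i j = 0)
    -- μ is a probability measure with full support, invariant for A
    (hμ_pos : ∀ i, 0 < μ i)
    (hμ_sum : ∑ i, μ i = 1)
    (hμ_inv : ∀ j, ∑ i, μ i * A i j = 0)
    -- the Donsker–Varadhan rate function of A
    (IeA : (Fin n → ℝ) → ℝ)
    (hIeA : ∀ ξ, IeA ξ = sSup {x : ℝ | ∃ u : Fin n → ℝ, (∀ i, 0 < u i) ∧
      x = -∑ i, ξ i * (A *ᵥ u) i / u i})
    -- the Donsker–Varadhan rate function of sym(A): ⟨u, -Au⟩_μ with u_i = √(ξ_i/μ_i)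
    (IeSym : (Fin n → ℝ) → ℝ)
    (hIeSym : ∀ ξ, IeSym ξ = ∑ i, μ i * Real.sqrt (ξ i / μ i) *
      (-(A *ᵥ fun j => Real.sqrt (ξ j / μ j)) i))
    -- the moment generating function of v under ξ
    (φ : (Fin n → ℝ) → ℝ → ℝ)
    (hφ : ∀ ξ α, φ ξ α = ∑ i, ξ i * Real.exp (α * v i))
    -- the two free energy functions
    (FA Fsym : ℝ → ℝ)
    (hFA : ∀ α, FA α = 2 * κ * (Real.cosh α - 1) +
      sSup {y : ℝ | ∃ ξ : Fin n → ℝ, (∀ i, 0 ≤ ξ i) ∧ (∑ i, ξ i = 1) ∧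
        y = lam * (φ ξ α - 1) - γ * IeA ξ})
    (hFsym : ∀ α, Fsym α = 2 * κ * (Real.cosh α - 1) +
      sSup {y : ℝ | ∃ ξ : Fin n → ℝ, (∀ i, 0 ≤ ξ i) ∧ (∑ i, ξ i = 1) ∧
        y = lam * (φ ξ α - 1) - γ * IeSym ξ})
    -- the rate functions: Legendre transforms of the free energies
    (IA Isym : ℝ → ℝ)
    (hIA : ∀ x, IA x = sSup {y : ℝ | ∃ α : ℝ, y = α * x - FA α})
    (hIsym : ∀ x, Isym x = sSup {y : ℝ | ∃ α : ℝ, y = α * x - Fsym α}) :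
    ∀ x : ℝ, Isym x ≤ IA x := by
  simp only [sSup_setOf_stdSimplex] at hFA hFsym
  have hIeSym_nonneg (ξ : Fin n → ℝ) : 0 ≤ IeSym ξ := by
    rw [hIeSym]
    exact dirichletForm_nonneg hA_off hA_row (fun i => (hμ_pos i).le) hμ_inv _
  have hIeSym_le (ξ : stdSimplex ℝ (Fin n)) : IeSym ξ.1 ≤ IeA ξ.1 := by
    rw [hIeSym, hIeA]
    exact dirichletForm_sqrt_le_sSup_donskerVaradhanSet hA_off hA_row hμ_pos ξ.2.1
  have hcont (α : ℝ) : Continuous fun ξ : stdSimplex ℝ (Fin n) => lam * (φ ξ.1 α - 1) := by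
    have : Continuous fun ξ : Fin n → ℝ => lam * (φ ξ α - 1) := by
      simp only [hφ]
      fun_prop
    exact this.comp continuous_subtype_val
  have hF (α : ℝ) : FA α ≤ Fsym α := by
    rw [hFA, hFsym]
    exact add_le_add_right (ciSup_sub_mul_le_ciSup_sub_mul (hcont α) (fun ξ => hIeSym_nonneg ξ.1)
      hIeSym_le hγ.le) _
  have hμ : μ ∈ stdSimplex ℝ (Fin n) := ⟨fun i => (hμ_pos i).le, hμ_sum⟩
  have hFA_ge (α : ℝ) : 2 * κ * (Real.cosh α - 1) - (lam + γ * IeA μ) ≤ FA α := by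
    have hφμ : 0 ≤ φ μ α := by
      rw [hφ]
      exact sum_nonneg fun i _ => mul_nonneg (hμ.1 i) (Real.exp_pos _).le
    have hsup : lam * (φ μ α - 1) - γ * IeA μ ≤
        ⨆ ξ : stdSimplex ℝ (Fin n), (lam * (φ ξ.1 α - 1) - γ * IeA ξ.1) :=
      le_ciSup (bddAbove_range_sub_mul (hcont α)
        (fun ξ => (hIeSym_nonneg ξ.1).trans (hIeSym_le ξ)) hγ.le) ⟨μ, hμ⟩
    rw [hFA]
    nlinarith
  intro x
  rw [hIsym, hIA, sSup_setOf_exists_eq, sSup_setOf_exists_eq]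
  exact ciSup_mul_sub_le_ciSup_mul_sub hκ hFA_ge hF x

/-- The large deviation rate function of the active particle (the Legendre
transform of the free energy) is minimized pointwise by the reversible state process:
`I^{sym}(x) ≤ I^A(x)` for all `x ∈ ℝ`. -/
theorem rate_function_reversible_min
    {n : ℕ} (hn : 0 < n)
    (A : Matrix (Fin n) (Fin n) ℝ) (μ : Fin n → ℝ)
    (κ lam γ : ℝ) (hκ : 0 < κ) (hlam : 0 < lam) (hγ : 0 < γ)
    (v : Fin n → ℝ)
    -- A is a Markov generator
    (hA_off : ∀ i j, i ≠ j → 0 ≤ A i j)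
    (hA_row : ∀ i, ∑ j, A i j = 0)
    -- μ is a probability measure with full support, invariant for A
    (hμ_pos : ∀ i, 0 < μ i)
    (hμ_sum : ∑ i, μ i = 1)
    (hμ_inv : ∀ j, ∑ i, μ i * A i j = 0)
    -- irreducibility/ergodicity: the kernel of A consists of the constant functions
    (h_erg : ∀ f : Fin n → ℝ, A *ᵥ f = 0 → ∃ c : ℝ, ∀ i, f i = c)
    -- the Donsker–Varadhan rate function of A
    (IeA : (Fin n → ℝ) → ℝ)
    (hIeA : ∀ ξ, IeA ξ = sSup {x : ℝ | ∃ u : Fin n → ℝ, (∀ i, 0 < u i) ∧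
      x = -∑ i, ξ i * (A *ᵥ u) i / u i})
    -- the Donsker–Varadhan rate function of sym(A): ⟨u, -Au⟩_μ with u_i = √(ξ_i/μ_i)
    (IeSym : (Fin n → ℝ) → ℝ)
    (hIeSym : ∀ ξ, IeSym ξ = ∑ i, μ i * Real.sqrt (ξ i / μ i) *
      (-(A *ᵥ fun j => Real.sqrt (ξ j / μ j)) i))
    -- the moment generating function of v under ξ
    (φ : (Fin n → ℝ) → ℝ → ℝ)
    (hφ : ∀ ξ α, φ ξ α = ∑ i, ξ i * Real.exp (α * v i))
    -- the two free energy functions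
    (FA Fsym : ℝ → ℝ)
    (hFA : ∀ α, FA α = 2 * κ * (Real.cosh α - 1) +
      sSup {y : ℝ | ∃ ξ : Fin n → ℝ, (∀ i, 0 ≤ ξ i) ∧ (∑ i, ξ i = 1) ∧
        y = lam * (φ ξ α - 1) - γ * IeA ξ})
    (hFsym : ∀ α, Fsym α = 2 * κ * (Real.cosh α - 1) +
      sSup {y : ℝ | ∃ ξ : Fin n → ℝ, (∀ i, 0 ≤ ξ i) ∧ (∑ i, ξ i = 1) ∧
        y = lam * (φ ξ α - 1) - γ * IeSym ξ})
    -- the rate functions: Legendre transforms of the free energies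
    (IA Isym : ℝ → ℝ)
    (hIA : ∀ x, IA x = sSup {y : ℝ | ∃ α : ℝ, y = α * x - FA α})
    (hIsym : ∀ x, Isym x = sSup {y : ℝ | ∃ α : ℝ, y = α * x - Fsym α}) :
    ∀ x : ℝ, Isym x ≤ IA x :=
  rate_function_reversible_min_general A μ κ lam γ hκ hlam hγ v hA_off hA_row hμ_pos hμ_sum hμ_inv
    IeA hIeA IeSym hIeSym φ hφ FA Fsym hFA hFsym IA Isym hIA hIsym
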